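/- arXiv:0706.4417 — 2 statements merged into one kernel-verified Lean document; each statement's English description precedes it below -/
import Mathlib

section
/- For every integer k ≥ 4, RR(x+y+kz=(k+1)w) = 5; that is, N = 5 is the least positive integer such that every 2-coloring χ : {1,…,N} → {0,1} admits positive integers x,y,z,w ≤ N with χ(x)=χ(y)=χ(z)=χ(w) and x + y + k·z = (k+1)·w. -/
/-!
Taking `z = w` turns `x + y + k z = (k + 1) w` into Schur's equation `x + y = w`, and every
2-coloring of `{1, …, 5}` has a monochromatic solution of `x + y = w`. Conversely, the coloring of
`{1, …, 4}` with classes `{1, 4}` and `{2, 3}` has no monochromatic solution once `k ≥ 4`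
(for `k = 3`, `3 + 3 + 3 · 2 = 4 · 3`).
-/

/-- The set of positive integers `N` such that every 2-coloring of `{1, ..., N}`
admits a monochromatic solution to `x + y + k*z = l*w`. -/
def radoSet (k l : ℕ) : Set ℕ :=
  {N : ℕ | 0 < N ∧ ∀ χ : ℕ → Fin 2, ∃ x y z w : ℕ,
    x ∈ Finset.Icc 1 N ∧ y ∈ Finset.Icc 1 N ∧ z ∈ Finset.Icc 1 N ∧ w ∈ Finset.Icc 1 N ∧
    χ x = χ y ∧ χ y = χ z ∧ χ z = χ w ∧ x + y + k * z = l * w}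

lemma Fin.two_eq_of_ne_of_ne {a b c : Fin 2} (hab : a ≠ b) (hcb : c ≠ b) : a = c := by
  omega

/-- Schur's theorem for two colors: `S(2) = 4`. -/
theorem exists_monochromatic_add_eq_of_le_five (χ : ℕ → Fin 2) :
    ∃ x y, 1 ≤ x ∧ 1 ≤ y ∧ x + y ≤ 5 ∧ χ x = χ y ∧ χ y = χ (x + y) := by
  by_cases h2 : χ 2 = χ 1
  · exact ⟨1, 1, le_rfl, le_rfl, by norm_num, rfl, h2.symm⟩
  by_cases h4 : χ 4 = χ 2
  · exact ⟨2, 2, by norm_num, by norm_num, by norm_num, rfl, h4.symm⟩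
  have h4 : χ 4 = χ 1 := Fin.two_eq_of_ne_of_ne h4 (Ne.symm h2)
  by_cases h3 : χ 3 = χ 1
  · exact ⟨1, 3, le_rfl, by norm_num, by norm_num, h3.symm, h3.trans h4.symm⟩
  have h3 : χ 3 = χ 2 := Fin.two_eq_of_ne_of_ne h3 h2
  by_cases h5 : χ 5 = χ 1
  · exact ⟨1, 4, le_rfl, by norm_num, by norm_num, h4.symm, h4.trans h5.symm⟩
  have h5 : χ 5 = χ 2 := Fin.two_eq_of_ne_of_ne h5 h2
  exact ⟨2, 3, by norm_num, by norm_num, by norm_num, h3.symm, h3.trans h5.symm⟩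

theorem radoSet_mono {k l N M : ℕ} (hN : N ∈ radoSet k l) (hNM : N ≤ M) : M ∈ radoSet k l := by
  obtain ⟨hpos, hsol⟩ := hN
  have hIcc : Finset.Icc 1 N ⊆ Finset.Icc 1 M := Finset.Icc_subset_Icc le_rfl hNM
  refine ⟨hpos.trans_le hNM, fun χ => ?_⟩
  obtain ⟨x, y, z, w, hx, hy, hz, hw, hsol⟩ := hsol χ
  exact ⟨x, y, z, w, hIcc hx, hIcc hy, hIcc hz, hIcc hw, hsol⟩

theorem five_mem_radoSet (k : ℕ) : 5 ∈ radoSet k (k + 1) := by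
  refine ⟨by norm_num, fun χ => ?_⟩
  obtain ⟨x, y, hx, hy, hxy, hcxy, hcw⟩ := exists_monochromatic_add_eq_of_le_five χ
  simp only [Finset.mem_Icc]
  exact ⟨x, y, x + y, x + y, by omega, by omega, by omega, by omega, hcxy, hcw, rfl, by ring⟩

def sumFreeColoring (n : ℕ) : Fin 2 :=
  if n = 2 ∨ n = 3 then 1 else 0

lemma sumFreeColoring_eq_zero_iff {n : ℕ} : sumFreeColoring n = 0 ↔ ¬(n = 2 ∨ n = 3) := by
  simp [sumFreeColoring]

lemma sumFreeColoring_eq_one_iff {n : ℕ} : sumFreeColoring n = 1 ↔ n = 2 ∨ n = 3 := by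
  unfold sumFreeColoring
  split_ifs with h <;> simp [h]

lemma add_add_mul_ne_of_one_or_four (k : ℕ) {x y z w : ℕ} (hx : x = 1 ∨ x = 4)
    (hy : y = 1 ∨ y = 4) (hz : z = 1 ∨ z = 4) (hw : w = 1 ∨ w = 4) :
    x + y + k * z ≠ (k + 1) * w := by
  rcases hx with rfl | rfl <;> rcases hy with rfl | rfl <;> rcases hz with rfl | rfl <;>
    rcases hw with rfl | rfl <;> omega

lemma add_add_mul_ne_of_two_or_three {k : ℕ} (hk : 4 ≤ k) {x y z w : ℕ} (hx : x = 2 ∨ x = 3)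
    (hy : y = 2 ∨ y = 3) (hz : z = 2 ∨ z = 3) (hw : w = 2 ∨ w = 3) :
    x + y + k * z ≠ (k + 1) * w := by
  rcases hx with rfl | rfl <;> rcases hy with rfl | rfl <;> rcases hz with rfl | rfl <;>
    rcases hw with rfl | rfl <;> omega

theorem four_not_mem_radoSet {k : ℕ} (hk : 4 ≤ k) : 4 ∉ radoSet k (k + 1) := by
  rintro ⟨-, hsol⟩
  obtain ⟨x, y, z, w, hx, hy, hz, hw, hxy, hyz, hzw, heq⟩ := hsol sumFreeColoring
  simp only [Finset.mem_Icc] at hx hy hz hw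
  have hyw := hyz.trans hzw
  have hxw := hxy.trans hyw
  obtain hc | hc : sumFreeColoring w = 0 ∨ sumFreeColoring w = 1 := by omega
  · rw [hc, sumFreeColoring_eq_zero_iff] at hxw hyw hzw
    rw [sumFreeColoring_eq_zero_iff] at hc
    exact add_add_mul_ne_of_one_or_four k (by omega) (by omega) (by omega) (by omega) heq
  · rw [hc, sumFreeColoring_eq_one_iff] at hxw hyw hzw
    rw [sumFreeColoring_eq_one_iff] at hc
    exact add_add_mul_ne_of_two_or_three hk hxw hyw hzw hc heq

/-- For `k ≥ 4`, `RR(x + y + k*z = (k+1)*w) = 5`. -/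
theorem RR_k_add_one_large (k : ℕ) (hk : 4 ≤ k) :
    IsLeast (radoSet k (k + 1)) 5 := by
  refine ⟨five_mem_radoSet k, fun N hN => ?_⟩
  by_contra! hN5
  exact four_not_mem_radoSet hk (radoSet_mono hN (by omega))
end

section
/- Let k be a positive integer with k ≡ 0 (mod 4). Then RR(x+y+kz=2w) = k(k+4)/4 + 1; that is, N = k(k+4)/4 + 1 is the least positive integer such that every 2-coloring χ : {1,…,N} → {0,1} admits positive integers x,y,z,w ≤ N with χ(x)=χ(y)=χ(z)=χ(w) and x + y + k·z = 2w. -/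
def HasMonoSolution (k l N : ℕ) (χ : ℕ → Fin 2) : Prop :=
  ∃ x y z w : ℕ,
    x ∈ Finset.Icc 1 N ∧ y ∈ Finset.Icc 1 N ∧ z ∈ Finset.Icc 1 N ∧ w ∈ Finset.Icc 1 N ∧
    χ x = χ y ∧ χ y = χ z ∧ χ z = χ w ∧ x + y + k * z = l * w

theorem mem_radoSet_iff {k l N : ℕ} :
    N ∈ radoSet k l ↔ 0 < N ∧ ∀ χ, HasMonoSolution k l N χ :=
  Iff.rfl

theorem HasMonoSolution.mono {k l N N' : ℕ} {χ : ℕ → Fin 2} (hN : N ≤ N')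
    (h : HasMonoSolution k l N χ) : HasMonoSolution k l N' χ := by
  obtain ⟨x, y, z, w, hx, hy, hz, hw, hxy, hyz, hzw, hsol⟩ := h
  have hsub := Finset.Icc_subset_Icc_right (a := 1) hN
  exact ⟨x, y, z, w, hsub hx, hsub hy, hsub hz, hsub hw, hxy, hyz, hzw, hsol⟩

theorem HasMonoSolution.of_color_eq {k l N : ℕ} {χ : ℕ → Fin 2} {x y z w : ℕ} {a : Fin 2}
    (hx : x ∈ Set.Icc 1 N) (hy : y ∈ Set.Icc 1 N) (hz : z ∈ Set.Icc 1 N) (hw : w ∈ Set.Icc 1 N)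
    (hsol : x + y + k * z = l * w) (hχx : χ x = a) (hχy : χ y = a) (hχz : χ z = a)
    (hχw : χ w = a) : HasMonoSolution k l N χ := by
  simp only [Set.mem_Icc] at hx hy hz hw
  exact ⟨x, y, z, w, Finset.mem_Icc.2 hx, Finset.mem_Icc.2 hy, Finset.mem_Icc.2 hz,
    Finset.mem_Icc.2 hw, hχx.trans hχy.symm, hχy.trans hχz.symm, hχz.trans hχw.symm, hsol⟩

theorem Fin.eq_of_ne_of_ne {a b c : Fin 2} (ha : a ≠ c) (hb : b ≠ c) : a = b := by
  omega

theorem not_hasMonoSolution_two_mul (j : ℕ) :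
    ¬ HasMonoSolution (2 * j) 2 ((j + 1) ^ 2 - 1) (fun n ↦ if n ≤ j then 0 else 1) := by
  rintro ⟨x, y, z, w, hx, hy, hz, hw, hxy, hyz, hzw, hsol⟩
  simp only [Finset.mem_Icc] at hx hy hz hw
  have hw' : w < (j + 1) ^ 2 := by have := pow_pos j.succ_pos 2; omega
  dsimp only at hxy hyz hzw
  split_ifs at hxy hyz hzw <;> simp only [Fin.reduceEq] at hxy hyz hzw
  all_goals nlinarith

section UpperBound

variable {m : ℕ} {χ : ℕ → Fin 2}

theorem four_mul_add_one_le_sq (m : ℕ) : 4 * m + 1 ≤ (2 * m + 1) ^ 2 := by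
  nlinarith

theorem color_odd_ne (hχ : ¬ HasMonoSolution (4 * m) 2 ((2 * m + 1) ^ 2) χ) :
    χ (2 * m + 1) ≠ χ 1 := fun h ↦ by
  have hN := four_mul_add_one_le_sq m
  exact hχ <| .of_color_eq (x := 1) (y := 1) (z := 1) ⟨le_rfl, by omega⟩ ⟨le_rfl, by omega⟩
    ⟨le_rfl, by omega⟩ ⟨by omega, by omega⟩ (by ring) rfl rfl rfl h

theorem color_sq_eq (hχ : ¬ HasMonoSolution (4 * m) 2 ((2 * m + 1) ^ 2) χ) :
    χ ((2 * m + 1) ^ 2) = χ 1 := by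
  have hN := four_mul_add_one_le_sq m
  by_contra hsq
  exact hχ <| .of_color_eq (x := 2 * m + 1) (y := 2 * m + 1) (z := 2 * m + 1)
    ⟨by omega, by omega⟩ ⟨by omega, by omega⟩ ⟨by omega, by omega⟩ ⟨by omega, le_rfl⟩ (by ring)
    rfl rfl rfl (Fin.eq_of_ne_of_ne hsq (color_odd_ne hχ))

theorem color_two_mul_eq (hm : 0 < m) (hχ : ¬ HasMonoSolution (4 * m) 2 ((2 * m + 1) ^ 2) χ) :
    χ (2 * m) = χ 1 := by
  have hN := four_mul_add_one_le_sq m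
  have hn := color_odd_ne hχ
  by_contra h2m
  have hmid : χ (2 * m + 1 + 4 * m ^ 2) = χ 1 := by
    by_contra hmid
    exact hχ <| .of_color_eq (x := 2 * m + 1) (y := 2 * m + 1) (z := 2 * m)
      ⟨by omega, by omega⟩ ⟨by omega, by omega⟩ ⟨by omega, by omega⟩ ⟨by omega, by nlinarith⟩
      (by ring) rfl rfl (Fin.eq_of_ne_of_ne h2m hn) (Fin.eq_of_ne_of_ne hmid hn)
  exact hχ <| .of_color_eq (x := 2 * m + 1 + 4 * m ^ 2) (y := 2 * m + 1 + 4 * m ^ 2) (z := 1)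
    ⟨by omega, by nlinarith⟩ ⟨by omega, by nlinarith⟩ ⟨le_rfl, by omega⟩ ⟨by omega, le_rfl⟩
    (by ring) hmid hmid rfl (color_sq_eq hχ)

theorem color_eq_of_color_succ_eq (hχ : ¬ HasMonoSolution (4 * m) 2 ((2 * m + 1) ^ 2) χ)
    {i : ℕ} (hi : 1 ≤ i) (hi' : i < 2 * m) (hsucc : χ (i + 1) = χ 1) : χ i = χ 1 := by
  have hN := four_mul_add_one_le_sq m
  have hmul : (2 * m + 1) * (i + 1) ≤ (2 * m + 1) ^ 2 := by
    rw [sq]; exact Nat.mul_le_mul_left _ (by omega)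
  have hshift : χ (i + 1 + 2 * m) ≠ χ 1 := fun h ↦ hχ <|
    .of_color_eq (x := i + 1) (y := i + 1) (z := 1) ⟨by omega, by omega⟩ ⟨by omega, by omega⟩
      ⟨le_rfl, by omega⟩ ⟨by omega, by omega⟩ (by ring) hsucc hsucc rfl h
  have hscale : χ ((2 * m + 1) * (i + 1)) ≠ χ 1 := fun h ↦ hχ <|
    .of_color_eq (x := i + 1) (y := i + 1) (z := i + 1) ⟨by omega, by omega⟩ ⟨by omega, by omega⟩
      ⟨by omega, by omega⟩ ⟨by nlinarith, hmul⟩ (by ring) hsucc hsucc hsucc h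
  by_contra hi1
  exact hχ <| .of_color_eq (x := i + 1 + 2 * m) (y := i + 1 + 2 * m) (z := i)
    ⟨by omega, by omega⟩ ⟨by omega, by omega⟩ ⟨hi, by omega⟩ ⟨by nlinarith, hmul⟩ (by ring)
    (Fin.eq_of_ne_of_ne hshift hi1) (Fin.eq_of_ne_of_ne hshift hi1) rfl
    (Fin.eq_of_ne_of_ne hscale hi1)

theorem color_eq_of_le_two_mul (hm : 0 < m)
    (hχ : ¬ HasMonoSolution (4 * m) 2 ((2 * m + 1) ^ 2) χ) {i : ℕ} (hi : 1 ≤ i)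
    (hi' : i ≤ 2 * m) : χ i = χ 1 := by
  refine Nat.decreasingInduction' (P := fun i ↦ χ i = χ 1) (fun j hj hij hsucc ↦ ?_) hi'
    (color_two_mul_eq hm hχ)
  exact color_eq_of_color_succ_eq hχ (hi.trans hij) hj hsucc

end UpperBound

theorem hasMonoSolution_four_mul_sq {m : ℕ} (hm : 0 < m) (χ : ℕ → Fin 2) :
    HasMonoSolution (4 * m) 2 ((2 * m + 1) ^ 2) χ := by
  by_contra hχ
  have hN := four_mul_add_one_le_sq m
  exact hχ <| .of_color_eq (x := (2 * m + 1) ^ 2) (y := 1) (z := m + 1) ⟨by omega, le_rfl⟩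
    ⟨le_rfl, by omega⟩ ⟨by omega, by omega⟩ ⟨by omega, le_rfl⟩ (by ring) (color_sq_eq hχ) rfl
    (color_eq_of_le_two_mul hm hχ (by omega) (by omega)) (color_sq_eq hχ)

/-- For `k ≡ 0 (mod 4)`, `RR(x + y + k*z = 2*w) = k*(k+4)/4 + 1`. -/
theorem RR_two_w_mod_four_zero (k : ℕ) (hk : 0 < k) (h4 : k % 4 = 0) :
    IsLeast (radoSet k 2) (k * (k + 4) / 4 + 1) := by
  obtain ⟨m, rfl⟩ : ∃ m, k = 4 * m := ⟨k / 4, by omega⟩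
  have hN : 4 * m * (4 * m + 4) / 4 + 1 = (2 * m + 1) ^ 2 := by
    rw [show 4 * m * (4 * m + 4) = 4 * (4 * m * m + 4 * m) by ring,
      Nat.mul_div_cancel_left _ four_pos]
    ring
  rw [hN]
  refine ⟨⟨by positivity, hasMonoSolution_four_mul_sq (by omega)⟩, fun M hM ↦ ?_⟩
  by_contra! hlt
  have hfree := not_hasMonoSolution_two_mul (2 * m)
  rw [show 2 * (2 * m) = 4 * m by ring] at hfree
  exact hfree (((mem_radoSet_iff.1 hM).2 _).mono (by omega))
end
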